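/- Let G be a weighted undirected graph partitioned into G_1, ..., G_k, and let s, t be vertices in the same partition G_i. If d_{G_i}(s,t) < min over b_1, b_2 ∈ B_i of [ d_{G_i}(s, b_1) + d_G(b_1, b_2) + d_{G_i}(b_2, t) ], then every shortest path from s to t in G stays entirely within G_i, and d_G(s,t) = d_{G_i}(s,t). -/

import Mathlib

open scoped ENNReal Classical

namespace PSP

/-- A weighted undirected graph: symmetric adjacency and a weight function
with values in `ℝ≥0∞` (so weights are non-negative). -/
structure WGraph (V : Type*) where
  Adj : V → V → Prop
  symm : ∀ {u v}, Adj u v → Adj v u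
  w : V → V → ℝ≥0∞

variable {V : Type*} {ι : Type*}

/-- Sum of `f` over consecutive pairs of a list. -/
noncomputable def pairSum (f : V → V → ℝ≥0∞) : List V → ℝ≥0∞
  | a :: b :: rest => f a b + pairSum f (b :: rest)
  | _ => 0

/-- Weighted length of a walk (given as a list of vertices). -/
noncomputable def wlen (G : WGraph V) (l : List V) : ℝ≥0∞ := pairSum G.w l

/-- `l` is a walk in `G` from `s` to `t`: consecutive vertices are adjacent,
the first vertex is `s` and the last is `t`. -/
def IsWalk (G : WGraph V) (s t : V) (l : List V) : Prop :=
  l.Chain' G.Adj ∧ l.head? = some s ∧ l.getLast? = some t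

/-- Shortest-path distance in `G` (`⊤` if no walk exists). -/
noncomputable def dist (G : WGraph V) (s t : V) : ℝ≥0∞ :=
  sInf {x | ∃ l, IsWalk G s t l ∧ wlen G l = x}

/-- Induced subgraph on a vertex set `S`. -/
def induce (G : WGraph V) (S : Set V) : WGraph V where
  Adj u v := G.Adj u v ∧ u ∈ S ∧ v ∈ S
  symm h := ⟨G.symm h.1, h.2.2, h.2.1⟩
  w := G.w

/-- A partition of the vertex set is given by a function `P : V → ι`
assigning each vertex its partition index. The set of all boundary
vertices: vertices having a neighbor in another partition. -/
def bdry (G : WGraph V) (P : V → ι) : Set V :=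
  {v | ∃ u, G.Adj v u ∧ P u ≠ P v}

/-- Boundary vertices of partition `i`. -/
def bdryIn (G : WGraph V) (P : V → ι) (i : ι) : Set V :=
  {v | P v = i ∧ ∃ u, G.Adj v u ∧ P u ≠ i}

/-- The induced subgraph `G_i` of partition `i`. -/
def partGraph (G : WGraph V) (P : V → ι) (i : ι) : WGraph V :=
  induce G {x | P x = i}

/-- The No-Boundary overlay graph `G̃`: vertices are boundary vertices; for each
partition, each boundary pair gets an edge of weight equal to the *local*
partition distance; inter-partition edges of `G` keep their original weight. -/
noncomputable def overlay (G : WGraph V) (P : V → ι) : WGraph V where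
  Adj u v := (P u = P v ∧ u ∈ bdry G P ∧ v ∈ bdry G P) ∨ (P u ≠ P v ∧ G.Adj u v)
  symm := by
    rintro u v (⟨h1, h2, h3⟩ | ⟨h1, h2⟩)
    · exact Or.inl ⟨h1.symm, h3, h2⟩
    · exact Or.inr ⟨fun h => h1 h.symm, G.symm h2⟩
  w u v := if P u = P v then dist (partGraph G P (P u)) u v else G.w u v

/-- A half-connected boundary vertex: has a non-boundary neighbor in its own partition. -/
def halfC (G : WGraph V) (P : V → ι) (b : V) : Prop :=
  b ∈ bdry G P ∧ ∃ u, G.Adj b u ∧ P u = P b ∧ u ∉ bdry G P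

/-- A full-connected boundary vertex: all in-partition neighbors are boundary vertices. -/
def fullC (G : WGraph V) (P : V → ι) (b : V) : Prop :=
  b ∈ bdry G P ∧ ∀ u, G.Adj b u → P u = P b → u ∈ bdry G P

/-- The pruned overlay graph `G̃'`, with inserted boundary-pair weights `ω`:
edges among half-connected boundary pairs of the same partition (weight `ω`),
all inter-partition edges, and the original in-partition adjacent edges of
full-connected boundary vertices. -/
noncomputable def pruned (G : WGraph V) (P : V → ι) (ω : V → V → ℝ≥0∞) : WGraph V where
  Adj u v :=
    (P u = P v ∧ halfC G P u ∧ halfC G P v) ∨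
    (P u ≠ P v ∧ G.Adj u v) ∨
    (P u = P v ∧ G.Adj u v ∧ u ∈ bdry G P ∧ v ∈ bdry G P ∧ (fullC G P u ∨ fullC G P v))
  symm := by
    rintro u v (⟨h1, h2, h3⟩ | ⟨h1, h2⟩ | ⟨h1, h2, h3, h4, h5⟩)
    · exact Or.inl ⟨h1.symm, h3, h2⟩
    · exact Or.inr (Or.inl ⟨fun h => h1 h.symm, G.symm h2⟩)
    · exact Or.inr (Or.inr ⟨h1.symm, G.symm h2, h4, h3, h5.symm⟩)
  w u v := if P u = P v ∧ halfC G P u ∧ halfC G P v then ω u v else G.w u v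

/-- The augmented partition graph `G'_i`: the induced subgraph `G_i` plus, for each
boundary pair `b₁ b₂ ∈ B_i`, an inserted edge of weight `ω b₁ b₂` (taking the
minimum with an already-existing edge weight). -/
noncomputable def augment (G : WGraph V) (P : V → ι) (i : ι) (ω : V → V → ℝ≥0∞) : WGraph V where
  Adj u v := (G.Adj u v ∧ P u = i ∧ P v = i) ∨ (u ∈ bdryIn G P i ∧ v ∈ bdryIn G P i)
  symm := by
    rintro u v (⟨h1, h2, h3⟩ | ⟨h1, h2⟩)
    · exact Or.inl ⟨G.symm h1, h3, h2⟩
    · exact Or.inr ⟨h2, h1⟩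
  w u v :=
    if u ∈ bdryIn G P i ∧ v ∈ bdryIn G P i then
      (if G.Adj u v ∧ P u = i ∧ P v = i then min (ω u v) (G.w u v) else ω u v)
    else G.w u v

/-- Graph obtained from `G` by adding, for every pair `u v ∈ S`, a shortcut edge
of weight `dist G u v` (taking the minimum with an already-existing edge weight). -/
noncomputable def shortcut (G : WGraph V) (S : Set V) : WGraph V where
  Adj u v := G.Adj u v ∨ (u ∈ S ∧ v ∈ S)
  symm := by
    rintro u v (h | ⟨h1, h2⟩)
    · exact Or.inl (G.symm h)
    · exact Or.inr ⟨h2, h1⟩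
  w u v :=
    if u ∈ S ∧ v ∈ S then
      (if G.Adj u v then min (dist G u v) (G.w u v) else dist G u v)
    else G.w u v

/-- Vertex-splitting construction: each cut vertex `x ∈ X` keeps its neighbors in
group `N x 0`; for `1 ≤ i ≤ l x` a duplicate `(x, i)` is created, connected to the
vertices of `N x i` with the original weights and to `x` by a zero-weight edge. -/
noncomputable def split (G : WGraph V) (X : Set V) (N : V → ℕ → Set V) (l : V → ℕ) :
    WGraph (V ⊕ V × ℕ) where
  Adj a b := match a, b with
    | .inl u, .inl v => G.Adj u v ∧ (u ∈ X → v ∈ N u 0) ∧ (v ∈ X → u ∈ N v 0)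
    | .inl v, .inr (x, i) => x ∈ X ∧ 1 ≤ i ∧ i ≤ l x ∧ ((G.Adj x v ∧ v ∈ N x i) ∨ v = x)
    | .inr (x, i), .inl v => x ∈ X ∧ 1 ≤ i ∧ i ≤ l x ∧ ((G.Adj x v ∧ v ∈ N x i) ∨ v = x)
    | .inr _, .inr _ => False
  symm := by
    rintro (u | ⟨x, i⟩) (v | ⟨y, j⟩) h
    · exact ⟨G.symm h.1, h.2.2, h.2.1⟩
    · exact h
    · exact h
    · exact h.elim
  w a b := match a, b with
    | .inl u, .inl v => G.w u v
    | .inl v, .inr (x, _) => if v = x then 0 else G.w x v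
    | .inr (x, _), .inl v => if v = x then 0 else G.w x v
    | .inr _, .inr _ => 0

/-!
A walk from `s` to `t` that leaves `G_i` splits at the last vertex `b₁` before it first leaves
and at the first vertex `b₂` after it last returns. Both lie in `B_i`, the outer pieces are walks
of `G_i` and the middle piece is a walk of `G`, so the walk is at least as long as
`d_{G_i}(s, b₁) + d_G(b₁, b₂) + d_{G_i}(b₂, t) > d_{G_i}(s, t)`. Hence no shortest walk leaves
`G_i`, and every walk of `G` from `s` to `t` is at least `d_{G_i}(s, t)` long.
-/

section Walks

variable {G : WGraph V} {s t u v : V} {l : List V}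

theorem isWalk_cons_cons {a b : V} :
    IsWalk G s t (a :: b :: l) ↔ a = s ∧ G.Adj a b ∧ IsWalk G b t (b :: l) :=
  ⟨fun ⟨hc, hh, hg⟩ => ⟨Option.some.inj hh, List.isChain_cons_cons.mp hc |>.1,
      List.isChain_cons_cons.mp hc |>.2, rfl, hg⟩,
    fun ⟨hs, hab, hc, _, hg⟩ => ⟨List.isChain_cons_cons.mpr ⟨hab, hc⟩, congrArg some hs, hg⟩⟩

theorem dist_le_wlen (h : IsWalk G s t l) : dist G s t ≤ wlen G l :=
  sInf_le ⟨l, h, rfl⟩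

theorem dist_self (G : WGraph V) (s : V) : dist G s s = 0 :=
  nonpos_iff_eq_zero.mp <| dist_le_wlen (s := s) (t := s) ⟨List.isChain_singleton _, rfl, rfl⟩

theorem dist_le_weight (h : G.Adj u v) : dist G u v ≤ G.w u v :=
  (dist_le_wlen (s := u) (t := v) ⟨List.isChain_pair.mpr h, rfl, rfl⟩).trans_eq (add_zero _)

theorem dist_le_weight_add_dist (h : G.Adj u v) : dist G u t ≤ G.w u v + dist G v t := by
  rw [add_comm, show dist G v t = sInf _ from rfl, ENNReal.sInf_add]
  refine le_iInf₂ fun _ ⟨l, hl, hlen⟩ => hlen ▸ ?_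
  obtain _ | ⟨a, l⟩ := l
  · exact absurd hl.2.1 (by simp)
  · obtain rfl : a = v := by simpa using hl.2.1
    rw [add_comm]
    exact dist_le_wlen (isWalk_cons_cons.mpr ⟨rfl, h, hl⟩)

theorem IsWalk.of_induce {S : Set V} (h : IsWalk (induce G S) s t l) : IsWalk G s t l :=
  ⟨h.1.imp fun _ _ hadj => hadj.1, h.2⟩

theorem IsWalk.induce_of_forall_mem {S : Set V} (h : IsWalk G s t l) (hS : ∀ v ∈ l, v ∈ S) :
    IsWalk (induce G S) s t l :=
  ⟨h.1.imp_of_mem_imp fun a b ha hb hab => ⟨hab, hS a ha, hS b hb⟩, h.2⟩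

theorem dist_le_dist_induce (S : Set V) : dist G s t ≤ dist (induce G S) s t :=
  le_sInf fun _ ⟨_, hl, hlen⟩ => hlen ▸ dist_le_wlen hl.of_induce

end Walks

section Partition

variable {G : WGraph V} {P : V → ι} {i : ι} {s t u : V} {l : List V}

theorem IsWalk.exists_entry_bdryIn_le_wlen (hl : IsWalk G u t l) (ht : P t = i)
    (hout : ∃ v ∈ l, P v ≠ i) :
    ∃ b ∈ bdryIn G P i, dist G u b + dist (partGraph G P i) b t ≤ wlen G l := by
  induction l generalizing u with
  | nil => exact absurd hl.2.1 (by simp)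
  | cons a l ih =>
    obtain _ | ⟨b, l⟩ := l
    · obtain ⟨v, hv, hvi⟩ := hout
      obtain rfl := List.mem_singleton.mp hv
      obtain rfl : v = t := by simpa using hl.2.2
      exact (hvi ht).elim
    obtain ⟨rfl, hab, hbl⟩ := isWalk_cons_cons.mp hl
    by_cases hrest : ∃ v ∈ b :: l, P v ≠ i
    · obtain ⟨c, hc, hle⟩ := ih hbl hrest
      refine ⟨c, hc, ?_⟩
      calc dist G a c + dist (partGraph G P i) c t
          ≤ G.w a b + (dist G b c + dist (partGraph G P i) c t) := by
            rw [← add_assoc]; gcongr; exact dist_le_weight_add_dist hab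
        _ ≤ G.w a b + wlen G (b :: l) := by gcongr
    · push Not at hrest
      have hai : P a ≠ i := by
        obtain ⟨v, hv, hvi⟩ := hout
        obtain rfl | hv := List.mem_cons.mp hv
        exacts [hvi, absurd (hrest v hv) hvi]
      exact ⟨b, ⟨hrest b List.mem_cons_self, a, G.symm hab, hai⟩,
        add_le_add (dist_le_weight hab) (dist_le_wlen (hbl.induce_of_forall_mem hrest))⟩

theorem IsWalk.exists_exit_entry_bdryIn_le_wlen (hl : IsWalk G s t l) (hs : P s = i)
    (ht : P t = i) (hout : ∃ v ∈ l, P v ≠ i) :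
    ∃ b₁ ∈ bdryIn G P i, ∃ b₂ ∈ bdryIn G P i,
      dist (partGraph G P i) s b₁ + dist G b₁ b₂ + dist (partGraph G P i) b₂ t ≤ wlen G l := by
  induction l generalizing s with
  | nil => exact absurd hl.2.1 (by simp)
  | cons a l ih =>
    obtain _ | ⟨b, l⟩ := l
    · obtain ⟨v, hv, hvi⟩ := hout
      obtain rfl := List.mem_singleton.mp hv
      obtain rfl : v = s := by simpa using hl.2.1
      exact (hvi hs).elim
    obtain ⟨rfl, hab, hbl⟩ := isWalk_cons_cons.mp hl
    by_cases hb : P b = i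
    · have hrest : ∃ v ∈ b :: l, P v ≠ i := by
        obtain ⟨v, hv, hvi⟩ := hout
        obtain rfl | hv := List.mem_cons.mp hv
        exacts [absurd hs hvi, ⟨v, hv, hvi⟩]
      obtain ⟨b₁, hb₁, b₂, hb₂, hle⟩ := ih hbl hb hrest
      refine ⟨b₁, hb₁, b₂, hb₂, ?_⟩
      calc dist (partGraph G P i) a b₁ + dist G b₁ b₂ + dist (partGraph G P i) b₂ t
          ≤ G.w a b + (dist (partGraph G P i) b b₁ + dist G b₁ b₂
              + dist (partGraph G P i) b₂ t) := by
            simp only [← add_assoc]; gcongr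
            exact dist_le_weight_add_dist (G := partGraph G P i) ⟨hab, hs, hb⟩
        _ ≤ G.w a b + wlen G (b :: l) := by gcongr
    · obtain ⟨b₂, hb₂, hle⟩ := hl.exists_entry_bdryIn_le_wlen ht ⟨b, by simp, hb⟩
      refine ⟨a, ⟨hs, b, hab, hb⟩, b₂, hb₂, ?_⟩
      rwa [dist_self, zero_add]

theorem IsWalk.iInf_bdryIn_le_wlen (hl : IsWalk G s t l) (hs : P s = i) (ht : P t = i)
    (hout : ∃ v ∈ l, P v ≠ i) :
    ⨅ b₁ ∈ bdryIn G P i, ⨅ b₂ ∈ bdryIn G P i,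
      dist (partGraph G P i) s b₁ + dist G b₁ b₂ + dist (partGraph G P i) b₂ t ≤ wlen G l := by
  obtain ⟨b₁, hb₁, b₂, hb₂, hle⟩ := hl.exists_exit_entry_bdryIn_le_wlen hs ht hout
  exact (iInf₂_le b₁ hb₁).trans <| (iInf₂_le b₂ hb₂).trans hle

end Partition

/-- dichotomy for same-partition queries: if the local distance beats
every boundary-concatenated distance, every shortest path stays in the partition
and the global distance equals the local one. -/
theorem stmt19 {V ι : Type*} (G : WGraph V) (P : V → ι) (i : ι) (s t : V)
    (hs : P s = i) (ht : P t = i)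
    (hlt : dist (partGraph G P i) s t <
      ⨅ b1 ∈ bdryIn G P i, ⨅ b2 ∈ bdryIn G P i,
        dist (partGraph G P i) s b1 + dist G b1 b2 + dist (partGraph G P i) b2 t) :
    (∀ l : List V, IsWalk G s t l → wlen G l = dist G s t → ∀ v ∈ l, P v = i) ∧
    dist G s t = dist (partGraph G P i) s t := by
  have hout : ∀ l, IsWalk G s t l → (∃ v ∈ l, P v ≠ i) → dist (partGraph G P i) s t < wlen G l :=
    fun l hl h => hlt.trans_le (hl.iInf_bdryIn_le_wlen hs ht h)
  have hle : ∀ l, IsWalk G s t l → dist (partGraph G P i) s t ≤ wlen G l := by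
    intro l hl
    by_cases hin : ∀ v ∈ l, P v = i
    · exact dist_le_wlen (G := partGraph G P i) (hl.induce_of_forall_mem hin)
    · push Not at hin
      exact (hout l hl hin).le
  have heq : dist G s t = dist (partGraph G P i) s t :=
    le_antisymm (dist_le_dist_induce _) (le_sInf fun _ ⟨l, hl, hlen⟩ => hlen ▸ hle l hl)
  refine ⟨fun l hl hmin v hv => ?_, heq⟩
  by_contra hvi
  exact (hout l hl ⟨v, hv, hvi⟩).ne' (hmin.trans heq)

end PSP
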